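/- Let (X,T) be a TDS which is mean sensitive and contains a mean proximal pair (q,p) where q is a transitive point and p is a fixed point (T p = p). Then (X,T) is densely mean Li-Yorke chaotic: there exist η > 0 and a dense uncountable subset K ⊂ X which is a mean Li-Yorke set with modulus η. -/

import Mathlib

/-!
For `δ` a constant of mean sensitivity, the mean Li-Yorke pairs of modulus `δ / 2` form a residual
subset of `X × X`. Each of the two conditions says that the continuous averages are frequently
below `ε` (resp. above `δ / 2 - ε`) for all `ε > 0`, which is a Gδ condition. The first is dense
because any two points `T^n q`, `T^m q` of the transitive orbit are mean proximal: both follow the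
fixed point `p` at the times where `q` does. The second is dense because, by mean sensitivity, any
pair `(x, y)` can be perturbed to `(x, y')` with `y, y'` at upper mean distance `> δ`, so that one
of the two pairs has upper mean distance `> δ / 2`.

Mean sensitivity also makes `X` perfect, and Mycielski's theorem then provides a dense uncountable
set all of whose pairs of distinct points lie in the residual relation. It is built as the set of
limit points of nested closed balls indexed by `ℕ × (ℕ → Bool)`: a binary tree of balls rooted in
each basic open set, the balls of any level being chosen pairwise in the next dense open set.
-/

open Filter Metric Set

/-- Birkhoff average of the distance between the orbits of `x` and `y`. -/
noncomputable def birkhoffAvg {X : Type*} [PseudoMetricSpace X]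
    (T : X → X) (x y : X) (N : ℕ) : ℝ :=
  (∑ k ∈ Finset.range N, dist (T^[k] x) (T^[k] y)) / N

/-- A pair `(x,y)` is mean proximal if
`liminf_{N→∞} (1/N) ∑_{k<N} d(T^k x, T^k y) = 0`. -/
def MeanProximalPair {X : Type*} [PseudoMetricSpace X] (T : X → X) (x y : X) : Prop :=
  liminf (birkhoffAvg T x y) atTop = 0

/-- `(X,T)` is mean sensitive. -/
def MeanSensitive {X : Type*} [PseudoMetricSpace X] (T : X → X) : Prop :=
  ∃ δ > (0 : ℝ), ∀ x : X, ∀ ε > (0 : ℝ), ∃ y ∈ ball x ε,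
    δ < limsup (birkhoffAvg T x y) atTop

/-- `K` is a mean Li-Yorke set with modulus `η`. -/
def MeanLiYorkeSetMod {X : Type*} [PseudoMetricSpace X]
    (T : X → X) (η : ℝ) (K : Set X) : Prop :=
  ∀ x ∈ K, ∀ y ∈ K, x ≠ y →
    MeanProximalPair T x y ∧ η ≤ limsup (birkhoffAvg T x y) atTop

open Topology

section BirkhoffAvg

variable {X : Type*} [PseudoMetricSpace X] (T : X → X)

lemma birkhoffAvg_comm (x y : X) : birkhoffAvg T x y = birkhoffAvg T y x := by
  ext N
  simp only [birkhoffAvg, dist_comm]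

lemma birkhoffAvg_nonneg (x y : X) (N : ℕ) : 0 ≤ birkhoffAvg T x y N :=
  div_nonneg (Finset.sum_nonneg fun _ _ => dist_nonneg) N.cast_nonneg

lemma birkhoffAvg_le_add (x y z : X) (N : ℕ) :
    birkhoffAvg T x z N ≤ birkhoffAvg T x y N + birkhoffAvg T y z N := by
  rw [birkhoffAvg, birkhoffAvg, birkhoffAvg, ← add_div, ← Finset.sum_add_distrib]
  gcongr with k
  exact dist_triangle _ _ _

lemma birkhoffAvg_self (x : X) : birkhoffAvg T x x = 0 := by
  ext N
  simp [birkhoffAvg]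

lemma continuous_birkhoffAvg {T : X → X} (hT : Continuous T) (N : ℕ) :
    Continuous fun z : X × X => birkhoffAvg T z.1 z.2 N :=
  (continuous_finsetSum _ fun k _ =>
    ((hT.iterate k).comp continuous_fst).dist ((hT.iterate k).comp continuous_snd)).div_const _

lemma birkhoffAvg_mul_eq_sum (x y : X) (N : ℕ) :
    birkhoffAvg T x y N * N = ∑ k ∈ Finset.range N, dist (T^[k] x) (T^[k] y) :=
  div_mul_cancel_of_imp fun h => by simp [Nat.cast_eq_zero.1 h]

lemma isBoundedUnder_ge_birkhoffAvg (x y : X) :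
    IsBoundedUnder (· ≥ ·) atTop (birkhoffAvg T x y) :=
  isBoundedUnder_of ⟨0, birkhoffAvg_nonneg T x y⟩

variable [BoundedSpace X]

lemma birkhoffAvg_le_diam (x y : X) (N : ℕ) : birkhoffAvg T x y N ≤ diam (univ : Set X) := by
  refine div_le_of_le_mul₀ N.cast_nonneg diam_nonneg ?_
  calc ∑ k ∈ Finset.range N, dist (T^[k] x) (T^[k] y)
      ≤ ∑ _k ∈ Finset.range N, diam (univ : Set X) :=
        Finset.sum_le_sum fun _ _ =>
          dist_le_diam_of_mem (Bornology.isBounded_univ.2 ‹_›) (mem_univ _) (mem_univ _)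
    _ = diam (univ : Set X) * N := by simp [mul_comm]

lemma isBoundedUnder_le_birkhoffAvg (x y : X) :
    IsBoundedUnder (· ≤ ·) atTop (birkhoffAvg T x y) :=
  isBoundedUnder_of ⟨_, birkhoffAvg_le_diam T x y⟩

lemma limsup_birkhoffAvg_le_add (x y z : X) :
    limsup (birkhoffAvg T x z) atTop ≤
      limsup (birkhoffAvg T x y) atTop + limsup (birkhoffAvg T y z) atTop :=
  (limsup_le_limsup (Eventually.of_forall (birkhoffAvg_le_add T x y z))
    (isBoundedUnder_ge_birkhoffAvg T x z).isCoboundedUnder_le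
    (isBoundedUnder_le_add (isBoundedUnder_le_birkhoffAvg T x y)
      (isBoundedUnder_le_birkhoffAvg T y z))).trans
  (limsup_add_le (isBoundedUnder_ge_birkhoffAvg T x y) (isBoundedUnder_le_birkhoffAvg T x y)
    (isBoundedUnder_ge_birkhoffAvg T y z).isCoboundedUnder_le
    (isBoundedUnder_le_birkhoffAvg T y z))

lemma meanProximalPair_iff {x y : X} :
    MeanProximalPair T x y ↔ ∀ ε > 0, ∃ᶠ N in atTop, birkhoffAvg T x y N < ε := by
  have hcob := (isBoundedUnder_le_birkhoffAvg T x y).isCoboundedUnder_ge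
  rw [MeanProximalPair, ← liminf_le_iff hcob (isBoundedUnder_ge_birkhoffAvg T x y),
    le_antisymm_iff, and_iff_left (le_liminf_of_le hcob (Eventually.of_forall
      (birkhoffAvg_nonneg T x y)))]

lemma meanProximalPair_iff_nat {x y : X} :
    MeanProximalPair T x y ↔
      ∀ m : ℕ, ∃ᶠ N in atTop, birkhoffAvg T x y N < 1 / (m + 1) := by
  refine (meanProximalPair_iff T).trans
    ⟨fun h m => h _ Nat.one_div_pos_of_nat, fun h ε hε => ?_⟩
  obtain ⟨m, hm⟩ := exists_nat_one_div_lt hε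
  exact (h m).mono fun N hN => hN.trans hm

lemma le_limsup_birkhoffAvg_iff_nat {x y : X} {η : ℝ} :
    η ≤ limsup (birkhoffAvg T x y) atTop ↔
      ∀ m : ℕ, ∃ᶠ N in atTop, η - 1 / (m + 1) < birkhoffAvg T x y N := by
  rw [le_limsup_iff (isBoundedUnder_ge_birkhoffAvg T x y).isCoboundedUnder_le
    (isBoundedUnder_le_birkhoffAvg T x y)]
  refine ⟨fun h m => h _ (sub_lt_self _ Nat.one_div_pos_of_nat), fun h c hc => ?_⟩
  obtain ⟨m, hm⟩ := exists_nat_one_div_lt (sub_pos.2 hc)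
  exact (h m).mono fun N hN => lt_trans (by linarith) hN

end BirkhoffAvg

section FixedPoint

variable {X : Type*} [PseudoMetricSpace X] {T : X → X} {p : X}

lemma birkhoffAvg_iterate_mul_le (hp : T p = p) (x : X) {n s : ℕ} (hns : n ≤ s) (N : ℕ) :
    birkhoffAvg T (T^[n] x) p N * N ≤ birkhoffAvg T x p (N + s) * ↑(N + s) := by
  simp only [birkhoffAvg_mul_eq_sum, Function.iterate_fixed hp]
  set f : ℕ → ℝ := fun k => dist (T^[k] x) p
  calc ∑ k ∈ Finset.range N, dist (T^[k] (T^[n] x)) p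
      = ∑ k ∈ Finset.range N, f (n + k) := by
        simp only [f, ← Function.iterate_add_apply, add_comm]
    _ ≤ ∑ k ∈ Finset.range (n + N), f k := by
        rw [Finset.sum_range_add]
        exact le_add_of_nonneg_left (Finset.sum_nonneg fun _ _ => dist_nonneg)
    _ ≤ ∑ k ∈ Finset.range (N + s), f k :=
        Finset.sum_le_sum_of_subset_of_nonneg (Finset.range_mono (by omega))
          fun _ _ _ => dist_nonneg

theorem meanProximalPair_iterate_iterate [BoundedSpace X] (hp : T p = p) {x : X}
    (hx : MeanProximalPair T x p) (n m : ℕ) : MeanProximalPair T (T^[n] x) (T^[m] x) := by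
  rw [meanProximalPair_iff] at hx ⊢
  intro ε hε
  set s := n + m
  -- Go through the fixed point `p`, then shift both sums back to the orbit of `x`.
  have key : ∀ N : ℕ, birkhoffAvg T (T^[n] x) (T^[m] x) N * N ≤
      2 * (birkhoffAvg T x p (N + s) * ↑(N + s)) := fun N => by
    have h := birkhoffAvg_le_add T (T^[n] x) p (T^[m] x) N
    rw [birkhoffAvg_comm T p] at h
    nlinarith [birkhoffAvg_iterate_mul_le hp x (Nat.le_add_right n m) N,
      birkhoffAvg_iterate_mul_le hp x (Nat.le_add_left m n) N, (N.cast_nonneg : (0 : ℝ) ≤ N)]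
  refine (tendsto_sub_atTop_nat s).frequently
    (((hx (ε / 4) (by positivity)).and_eventually (eventually_ge_atTop (2 * s + 1))).mono ?_)
  rintro N ⟨hN, hNs⟩
  obtain ⟨M, rfl⟩ : ∃ M, N = M + s := ⟨N - s, by omega⟩
  rw [Nat.add_sub_cancel]
  have hM : (0 : ℝ) < M := by exact_mod_cast (show 0 < M by omega)
  have hMs : ((M + s : ℕ) : ℝ) ≤ 2 * M := by exact_mod_cast (show M + s ≤ 2 * M by omega)
  refine lt_of_mul_lt_mul_right ((key M).trans_lt ?_) hM.le
  nlinarith [birkhoffAvg_nonneg T x p (M + s)]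

end FixedPoint

section MeanSensitive

variable {X : Type*} [PseudoMetricSpace X] {T : X → X}

lemma MeanSensitive.perfectSpace (h : MeanSensitive T) : PerfectSpace X := by
  obtain ⟨δ, hδ, hsens⟩ := h
  refine ⟨fun x _ => accPt_iff_nhds.2 fun U hU => ?_⟩
  obtain ⟨ε, hε, hεU⟩ := Metric.mem_nhds_iff.1 hU
  obtain ⟨y, hy, hxy⟩ := hsens x ε hε
  refine ⟨y, ⟨hεU hy, mem_univ y⟩, ?_⟩
  rintro rfl
  rw [birkhoffAvg_self, Pi.zero_def, limsup_const] at hxy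
  exact hxy.not_gt hδ

lemma dense_setOf_half_lt_limsup [BoundedSpace X] {δ : ℝ}
    (hsens : ∀ x : X, ∀ ε > (0 : ℝ), ∃ y ∈ ball x ε, δ < limsup (birkhoffAvg T x y) atTop) :
    Dense {z : X × X | δ / 2 < limsup (birkhoffAvg T z.1 z.2) atTop} := by
  refine Metric.dense_iff.2 fun z ε hε => ?_
  obtain ⟨y, hy, hδy⟩ := hsens z.2 ε hε
  by_cases hz : δ / 2 < limsup (birkhoffAvg T z.1 z.2) atTop
  · exact ⟨z, mem_ball_self hε, hz⟩
  · refine ⟨(z.1, y), ?_, ?_⟩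
    · rw [mem_ball, Prod.dist_eq, dist_self]
      exact max_lt hε (mem_ball.1 hy)
    · have := limsup_birkhoffAvg_le_add T z.2 z.1 y
      rw [birkhoffAvg_comm T z.2 z.1] at this
      show δ / 2 < limsup (birkhoffAvg T z.1 y) atTop
      linarith

end MeanSensitive

section Residual

variable {Y Z : Type*} [TopologicalSpace Y] [TopologicalSpace Z] {f : ℕ → Y → Z}

lemma isGδ_setOf_frequently_mem (hf : ∀ N, Continuous (f N)) {s : Set Z} (hs : IsOpen s) :
    IsGδ {y | ∃ᶠ N in atTop, f N y ∈ s} := by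
  have : {y | ∃ᶠ N in atTop, f N y ∈ s} = ⋂ M, ⋃ N ≥ M, f N ⁻¹' s := by
    ext
    simp [frequently_atTop]
  rw [this]
  exact .iInter_of_isOpen fun M => isOpen_biUnion fun N _ => hs.preimage (hf N)

lemma eventually_residual_forall_frequently_mem (hf : ∀ N, Continuous (f N)) {s : ℕ → Set Z}
    (hs : ∀ m, IsOpen (s m)) (hd : Dense {y | ∀ m, ∃ᶠ N in atTop, f N y ∈ s m}) :
    ∀ᶠ y in residual Y, ∀ m, ∃ᶠ N in atTop, f N y ∈ s m :=
  eventually_countable_forall.2 fun m =>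
    residual_of_dense_Gδ (isGδ_setOf_frequently_mem hf (hs m)) (hd.mono (ofPred_subset_ofPred.2 fun _ hy => hy m))

end Residual

section MeanLiYorke

variable {X : Type*} [PseudoMetricSpace X] [BoundedSpace X] {T : X → X}

lemma eventually_residual_meanProximalPair (hT : Continuous T)
    (hd : Dense {z : X × X | MeanProximalPair T z.1 z.2}) :
    ∀ᶠ z in residual (X × X), MeanProximalPair T z.1 z.2 := by
  simp only [meanProximalPair_iff_nat] at hd ⊢
  exact eventually_residual_forall_frequently_mem (continuous_birkhoffAvg hT)
    (fun _ => isOpen_Iio) hd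

lemma eventually_residual_le_limsup (hT : Continuous T) {η : ℝ}
    (hd : Dense {z : X × X | η ≤ limsup (birkhoffAvg T z.1 z.2) atTop}) :
    ∀ᶠ z in residual (X × X), η ≤ limsup (birkhoffAvg T z.1 z.2) atTop := by
  simp only [le_limsup_birkhoffAvg_iff_nat] at hd ⊢
  exact eventually_residual_forall_frequently_mem (continuous_birkhoffAvg hT)
    (fun _ => isOpen_Ioi) hd

end MeanLiYorke

section FiniteSelection

variable {X ι : Type*}

lemma dense_setOf_apply_mem [TopologicalSpace X] [DecidableEq ι] {D : Set (X × X)}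
    (hD : Dense D) {i j : ι} (hij : i ≠ j) :
    Dense {y : ι → X | (y i, y j) ∈ D} := by
  refine dense_iff_inter_open.2 fun U hU ⟨y, hy⟩ => ?_
  let g : X × X → ι → X := fun z => Function.update (Function.update y i z.1) j z.2
  have hg : Continuous g := by fun_prop
  have hgy : g (y i, y j) = y := by simp [g]
  obtain ⟨z, hzU, hzD⟩ :=
    hD.inter_open_nonempty _ (hU.preimage hg) ⟨_, by rwa [mem_preimage, hgy]⟩
  refine ⟨g z, hzU, ?_⟩
  simpa [g, Function.update_of_ne hij] using hzD

lemma dense_setOf_pairwise_mem [TopologicalSpace X] [Finite ι] {D : Set (X × X)}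
    (hD : Dense D) (hDo : IsOpen D) :
    Dense {y : ι → X | ∀ i j, i ≠ j → (y i, y j) ∈ D} := by
  classical
  have : {y : ι → X | ∀ i j, i ≠ j → (y i, y j) ∈ D} =
      ⋂₀ range fun ij : {ij : ι × ι // ij.1 ≠ ij.2} =>
        {y : ι → X | (y ij.1.1, y ij.1.2) ∈ D} := by
    ext y
    simp
  rw [this]
  refine (finite_range _).dense_sInter ?_ ?_ <;> rintro _ ⟨⟨⟨i, j⟩, hij⟩, rfl⟩
  · exact hDo.preimage ((continuous_apply i).prodMk (continuous_apply j))
  · exact dense_setOf_apply_mem hD hij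

lemma exists_closedBall_subset_pairwise [PseudoMetricSpace X] [Finite ι]
    {D : Set (X × X)} (hD : Dense D) (hDo : IsOpen D) {O : ι → Set X} (hO : ∀ i, IsOpen (O i))
    (hne : ∀ i, (O i).Nonempty) :
    ∃ y : ι → X, ∃ r > 0, (∀ i, closedBall (y i) r ⊆ O i) ∧
      ∀ i j, i ≠ j → closedBall (y i) r ×ˢ closedBall (y j) r ⊆ D := by
  obtain ⟨y, hyO, hyD⟩ := (dense_setOf_pairwise_mem hD hDo).inter_open_nonempty (univ.pi O)
    (isOpen_set_pi finite_univ fun i _ => hO i) (univ_pi_nonempty_iff.2 hne)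
  have hsmall : ∀ᶠ r in 𝓝 (0 : ℝ), (∀ i, closedBall (y i) r ⊆ O i) ∧
      ∀ i j, i ≠ j → closedBall (y i) r ×ˢ closedBall (y j) r ⊆ D := by
    refine (eventually_all.2 fun i =>
      eventually_closedBall_subset ((hO i).mem_nhds (hyO i trivial))).and
        (eventually_all.2 fun i => eventually_all.2 fun j => ?_)
    by_cases hij : i = j
    · exact Eventually.of_forall fun _ h => absurd hij h
    · simp_rw [closedBall_prod_same]
      exact (eventually_closedBall_subset (hDo.mem_nhds (hyD i j hij))).mono fun _ hr _ => hr
  obtain ⟨r, hr, hr0⟩ := ((hsmall.filter_mono nhdsWithin_le_nhds).and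
    (self_mem_nhdsWithin (s := Ioi (0 : ℝ)))).exists
  exact ⟨y, r, hr0, hr⟩

end FiniteSelection

lemma exists_seq_of_forall_exists_succ {S : ℕ → Type*} {P : ∀ n, S n → Prop}
    {R : ∀ n, S n → S (n + 1) → Prop} (h₀ : ∃ s, P 0 s)
    (h : ∀ n s, P n s → ∃ s', P (n + 1) s' ∧ R n s s') :
    ∃ f : ∀ n, S n, ∀ n, P n (f n) ∧ R n (f n) (f (n + 1)) := by
  choose s₀ hs₀ using h₀
  choose g hgP hgR using h
  let F : ∀ n, {s : S n // P n s} :=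
    fun n => Nat.rec ⟨s₀, hs₀⟩ (fun n t => ⟨g n t.1 t.2, hgP n t.1 t.2⟩) n
  exact ⟨fun n => (F n).1, fun n => ⟨(F n).2, hgR n _ _⟩⟩

section CantorScheme

/-- At level `n` the scheme has a ball for every pair `(m, w)` with `m < n` and `w` a word of
length `n`; the point with index `(m, ω)` lies in the balls of `(m, ω|n)` for `n > m`. -/
abbrev SchemeNode (n : ℕ) : Type := Fin n × (Fin n → Bool)

def schemeNode (b : ℕ × (ℕ → Bool)) {n : ℕ} (h : b.1 < n) : SchemeNode n :=
  (⟨b.1, h⟩, fun i => b.2 i)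

lemma eventually_schemeNode_ne {b b' : ℕ × (ℕ → Bool)} (h : b ≠ b') :
    ∀ᶠ n in atTop, ∀ (hb : b.1 < n) (hb' : b'.1 < n), schemeNode b hb ≠ schemeNode b' hb' := by
  obtain ⟨m, ω⟩ := b
  obtain ⟨m', ω'⟩ := b'
  by_cases hm : m = m'
  · subst hm
    obtain ⟨i, hi⟩ := Function.ne_iff.1 fun hω : ω = ω' => h (by rw [hω])
    filter_upwards [eventually_gt_atTop i] with n hn _ _ heq
    exact hi (congrFun (congrArg Prod.snd heq) ⟨i, hn⟩)
  · exact Eventually.of_forall fun n _ _ heq => hm (congrArg (fun s => (s.1 : ℕ)) heq)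

variable {X : Type*} [PseudoMetricSpace X]

-- The nodes `(n, w)` first appear at level `n + 1`; they start a new tree inside `V n`.
def schemeTarget (V : ℕ → Set X) {n : ℕ} (c : SchemeNode n → X) (r : ℝ)
    (s : SchemeNode (n + 1)) : Set X :=
  if h : (s.1 : ℕ) < n then ball (c (⟨s.1, h⟩, Fin.init s.2)) r else V n

variable {V : ℕ → Set X}

lemma schemeTarget_schemeNode_of_lt {n : ℕ} (c : SchemeNode n → X) (r : ℝ)
    {b : ℕ × (ℕ → Bool)} (h : b.1 < n) :
    schemeTarget V c r (schemeNode b (h.trans n.lt_succ_self)) = ball (c (schemeNode b h)) r :=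
  dif_pos h

lemma schemeTarget_schemeNode_self {n : ℕ} (c : SchemeNode n → X) (r : ℝ) (ω : ℕ → Bool) :
    schemeTarget V c r (schemeNode (n, ω) n.lt_succ_self) = V n :=
  dif_neg (lt_irrefl n)

lemma exists_schemeLevels (hVo : ∀ m, IsOpen (V m)) (hVne : ∀ m, (V m).Nonempty)
    {D : ℕ → Set (X × X)} (hDo : ∀ n, IsOpen (D n)) (hDd : ∀ n, Dense (D n)) :
    ∃ (c : ∀ n, SchemeNode n → X) (r : ℕ → ℝ), ∀ n, 0 < r n ∧
      (∀ s t, s ≠ t → closedBall (c n s) (r n) ×ˢ closedBall (c n t) (r n) ⊆ D n) ∧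
      ∀ s, closedBall (c (n + 1) s) (r (n + 1)) ⊆ schemeTarget V (c n) (r n) s := by
  obtain ⟨st, hst⟩ := exists_seq_of_forall_exists_succ (S := fun n => (SchemeNode n → X) × ℝ)
    (P := fun n st => 0 < st.2 ∧
      ∀ s t, s ≠ t → closedBall (st.1 s) st.2 ×ˢ closedBall (st.1 t) st.2 ⊆ D n)
    (R := fun n st st' => ∀ s, closedBall (st'.1 s) st'.2 ⊆ schemeTarget V st.1 st.2 s)
    ⟨(fun s => s.1.elim0, 1), one_pos, fun s => s.1.elim0⟩ fun n st hst => by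
      have hTo : ∀ s, IsOpen (schemeTarget V st.1 st.2 s) := fun s => by
        unfold schemeTarget; split_ifs
        exacts [isOpen_ball, hVo n]
      have hTne : ∀ s, (schemeTarget V st.1 st.2 s).Nonempty := fun s => by
        unfold schemeTarget; split_ifs
        exacts [nonempty_ball.2 hst.1, hVne n]
      obtain ⟨c, r, hr, hcT, hcD⟩ :=
        exists_closedBall_subset_pairwise (hDd (n + 1)) (hDo (n + 1)) hTo hTne
      exact ⟨(c, r), ⟨hr, hcD⟩, hcT⟩
  exact ⟨fun n => (st n).1, fun n => (st n).2, fun n => ⟨(hst n).1.1, (hst n).1.2, (hst n).2⟩⟩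

lemma exists_cantorScheme [CompactSpace X] (hVo : ∀ m, IsOpen (V m))
    (hVne : ∀ m, (V m).Nonempty) {D : ℕ → Set (X × X)} (hDo : ∀ n, IsOpen (D n))
    (hDd : ∀ n, Dense (D n)) :
    ∃ x : ℕ × (ℕ → Bool) → X, (∀ m ω, x (m, ω) ∈ V m) ∧
      ∀ b b', b ≠ b' → ∀ᶠ n in atTop, (x b, x b') ∈ D n := by
  obtain ⟨c, r, hcr⟩ := exists_schemeLevels hVo hVne hDo hDd
  have hx : ∀ b : ℕ × (ℕ → Bool), ∃ x, ∀ n (h : b.1 < n),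
      x ∈ closedBall (c n (schemeNode b h)) (r n) := by
    intro b
    let K : ℕ → Set X := fun k =>
      closedBall (c (b.1 + k + 1) (schemeNode b (by omega))) (r (b.1 + k + 1))
    have hK : ∀ k, K (k + 1) ⊆ K k := fun k =>
      ((hcr _).2.2 _).trans <| (schemeTarget_schemeNode_of_lt _ _ _).trans_subset
        ball_subset_closedBall
    obtain ⟨x, hx⟩ := IsCompact.nonempty_iInter_of_sequence_nonempty_isCompact_isClosed K hK
      (fun k => nonempty_closedBall.2 (hcr _).1.le) isClosed_closedBall.isCompact
      fun k => isClosed_closedBall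
    refine ⟨x, fun n h => ?_⟩
    obtain ⟨k, rfl⟩ := Nat.exists_eq_add_of_lt h
    exact mem_iInter.1 hx k
  choose x hx using hx
  refine ⟨x, fun m ω => ?_, fun b b' hne => ?_⟩
  · rw [← schemeTarget_schemeNode_self (V := V) (c m) (r m) ω]
    exact (hcr m).2.2 _ (hx (m, ω) (m + 1) m.lt_succ_self)
  · filter_upwards [eventually_gt_atTop b.1, eventually_gt_atTop b'.1,
      eventually_schemeNode_ne hne] with n hb hb' hn
    exact (hcr n).2.1 _ _ (hn hb hb') ⟨hx b n hb, hx b' n hb'⟩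

end CantorScheme

instance : Uncountable (ℕ → Bool) := by
  rw [← not_countable_iff, ← Cardinal.mk_le_aleph0_iff]
  simpa using Cardinal.aleph0_lt_continuum

lemma dense_compl_diagonal {X : Type*} [TopologicalSpace X] [PerfectSpace X] :
    Dense (diagonal X)ᶜ := by
  refine interior_eq_empty_iff_dense_compl.1 (eq_empty_of_forall_notMem fun z hz => ?_)
  obtain ⟨a, rfl⟩ : ∃ a, z = (a, a) :=
    ⟨z.1, Prod.ext rfl (mem_diagonal_iff.1 (interior_subset hz)).symm⟩
  have hopen : IsOpen {b | (a, b) ∈ interior (diagonal X)} :=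
    isOpen_interior.preimage (Continuous.prodMk_right a)
  have hsingleton : {a} = {b | (a, b) ∈ interior (diagonal X)} := by
    ext b
    exact ⟨by rintro rfl; exact hz, fun hb => (mem_diagonal_iff.1 (interior_subset hb)).symm⟩
  exact not_isOpen_singleton a (hsingleton ▸ hopen)

/-- Mycielski's theorem, dense version. -/
theorem exists_dense_not_countable_pairwise {X : Type*} [MetricSpace X] [CompactSpace X]
    [PerfectSpace X] [Nonempty X] {r : X → X → Prop}
    (hr : ∀ᶠ z in residual (X × X), r z.1 z.2) :
    ∃ K : Set X, Dense K ∧ ¬ K.Countable ∧ K.Pairwise r := by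
  obtain ⟨G, hGr, hGδ, hGd⟩ := mem_residual.1 hr
  obtain ⟨W, hWo, rfl⟩ := hGδ.eq_iInter_nat
  obtain ⟨B, hBc, hBe, hB⟩ := TopologicalSpace.exists_countable_basis X
  obtain ⟨V, rfl⟩ := hBc.exists_eq_range (by
    obtain ⟨o, ho, -⟩ := mem_sUnion.1 (hB.sUnion_eq.symm ▸ mem_univ (Classical.arbitrary X))
    exact ⟨o, ho⟩)
  let D : ℕ → Set (X × X) := fun n => (diagonal X)ᶜ ∩ ⋂ k ≤ n, W k
  have hDo : ∀ n, IsOpen (D n) := fun n =>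
    isClosed_diagonal.isOpen_compl.inter ((finite_Iic n).isOpen_biInter fun k _ => hWo k)
  have hDd : ∀ n, Dense (D n) := fun n =>
    (dense_compl_diagonal.inter_of_isOpen_left hGd isClosed_diagonal.isOpen_compl).mono
      (inter_subset_inter_right _ (subset_iInter₂ fun k _ => iInter_subset _ k))
  obtain ⟨x, hxV, hxD⟩ := exists_cantorScheme (fun m => hB.isOpen (mem_range_self m))
    (fun m => nonempty_iff_ne_empty.2 fun h => hBe (h ▸ mem_range_self m)) hDo hDd
  have hx : ∀ b b', b ≠ b' → x b ≠ x b' ∧ (x b, x b') ∈ ⋂ k, W k := by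
    intro b b' hne
    refine ⟨fun h => ?_, mem_iInter.2 fun k => ?_⟩
    · obtain ⟨n, hn⟩ := (hxD b b' hne).exists
      exact hn.1 (mem_diagonal_iff.2 h)
    · obtain ⟨n, hn, hkn⟩ := ((hxD b b' hne).and (eventually_ge_atTop k)).exists
      exact mem_iInter₂.1 hn.2 k hkn
  refine ⟨range x, ?_, ?_, ?_⟩
  · refine hB.dense_iff.2 fun o ho _ => ?_
    obtain ⟨m, rfl⟩ := ho
    exact ⟨x (m, fun _ => false), hxV _ _, mem_range_self _⟩
  · have hxinj : Function.Injective x := fun b b' h => not_not.1 fun hne => (hx b b' hne).1 h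
    exact fun hcount => not_countable_univ (by simpa using hcount.preimage hxinj)
  · rintro _ ⟨b, rfl⟩ _ ⟨b', rfl⟩ hne
    exact hGr (hx b b' fun h => hne (h ▸ rfl)).2

/-- If a TDS is mean sensitive and contains a mean proximal pair consisting of a
transitive point `q` and a fixed point `p`, then it is densely mean Li-Yorke chaotic. -/
theorem densely_mean_LiYorke_chaotic_of_fixed_point
    {X : Type*} [MetricSpace X] [CompactSpace X] (T : X → X) (hT : Continuous T)
    (hsens : MeanSensitive T) (q p : X)
    (hq : Dense (Set.range fun n : ℕ => T^[n] q))
    (hp : T p = p)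
    (hqp : MeanProximalPair T q p) :
    ∃ η > (0 : ℝ), ∃ K : Set X,
      Dense K ∧ ¬ K.Countable ∧ MeanLiYorkeSetMod T η K := by
  have : PerfectSpace X := hsens.perfectSpace
  have : Nonempty X := ⟨p⟩
  obtain ⟨δ, hδ, hsens⟩ := hsens
  have hprox : Dense {z : X × X | MeanProximalPair T z.1 z.2} := by
    refine (DenseRange.prodMap hq hq).mono ?_
    rintro _ ⟨⟨n, m⟩, rfl⟩
    exact meanProximalPair_iterate_iterate hp hqp n m
  have hfar : Dense {z : X × X | δ / 2 ≤ limsup (birkhoffAvg T z.1 z.2) atTop} :=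
    (dense_setOf_half_lt_limsup hsens).mono (ofPred_subset_ofPred.2 fun _ => le_of_lt)
  obtain ⟨K, hKd, hKc, hK⟩ := exists_dense_not_countable_pairwise
    (r := fun x y => MeanProximalPair T x y ∧ δ / 2 ≤ limsup (birkhoffAvg T x y) atTop)
    ((eventually_residual_meanProximalPair hT hprox).and (eventually_residual_le_limsup hT hfar))
  exact ⟨δ / 2, half_pos hδ, K, hKd, hKc, hK⟩
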